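/- arXiv:0903.0653 — 5 statements merged into one kernel-verified Lean document; each statement's English description precedes it below -/
import Mathlib

section
/- Let f : Q → S be a continuous surjection between compact Hausdorff spaces and let d : Q × Q → ℝ be a lower semicontinuous map that fragments Q. Define d̂(x,y) = inf{ d(u,v) : f(u) = x, f(v) = y }. Then d̂ fragments S. -/
/-!
Among the closed subsets of `f ⁻¹' L` that `f` maps onto `L`, Zorn's lemma and Cantor's
intersection theorem give a minimal one, `K`. Fragment `K` by an open `W` of small diameter.
By minimality the compact set `K \ W` does not map onto `L`, so the complement of its image is
an open set meeting `L`; every point of `L` there has all its `K`-preimages in `W`, hence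
`d̂`-distances below those realised inside `K ∩ W`.
-/

open Set

/-- `d` fragments a topological space `X`: every nonempty closed subset has a nonempty
relatively open subset of `d`-diameter less than `ε`, for each `ε > 0`. -/
def Fragments {X : Type*} [TopologicalSpace X] (d : X → X → ℝ) : Prop :=
  ∀ ε > (0 : ℝ), ∀ L : Set X, L.Nonempty → IsClosed L →
    ∃ U : Set X, IsOpen U ∧ (L ∩ U).Nonempty ∧
      ∀ x ∈ L ∩ U, ∀ y ∈ L ∩ U, d x y < ε

section MinimalClosedPreimage

variable {Q S : Type*} [TopologicalSpace Q] [TopologicalSpace S] {f : Q → S}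

theorem image_sInter_eq_of_isChain [CompactSpace Q] [T1Space S] (hf : Continuous f)
    {c : Set (Set Q)} {L : Set S} (hc : ∀ K ∈ c, IsClosed K ∧ f '' K = L)
    (hchain : IsChain (· ⊆ ·) c) (hne : c.Nonempty) : f '' ⋂₀ c = L := by
  obtain ⟨K₀, hK₀⟩ := hne
  refine (image_mono (sInter_subset_of_mem hK₀)).trans (hc K₀ hK₀).2.le |>.antisymm ?_
  intro x hx
  have : Nonempty c := ⟨⟨K₀, hK₀⟩⟩
  have hfiber : (⋂ K : c, (K : Set Q) ∩ f ⁻¹' {x}).Nonempty := by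
    refine IsCompact.nonempty_iInter_of_directed_nonempty_isCompact_isClosed _ ?_ ?_ ?_ ?_
    · rintro ⟨K₁, h₁⟩ ⟨K₂, h₂⟩
      rcases hchain.total h₁ h₂ with h | h
      · exact ⟨⟨K₁, h₁⟩, subset_rfl, inter_subset_inter_left _ h⟩
      · exact ⟨⟨K₂, h₂⟩, inter_subset_inter_left _ h, subset_rfl⟩
    · rintro ⟨K, hK⟩
      obtain ⟨u, hu, rfl⟩ := (hc K hK).2.symm ▸ hx
      exact ⟨u, hu, rfl⟩
    · exact fun K => ((hc K K.2).1.inter (isClosed_singleton.preimage hf)).isCompact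
    · exact fun K => (hc K K.2).1.inter (isClosed_singleton.preimage hf)
  obtain ⟨u, hu⟩ := hfiber
  simp only [mem_iInter] at hu
  exact ⟨u, fun K hK => (hu ⟨K, hK⟩).1, (hu ⟨K₀, hK₀⟩).2⟩

theorem exists_minimal_isClosed_image_eq [CompactSpace Q] [T1Space S] (hf : Continuous f)
    {K₀ : Set Q} (hK₀ : IsClosed K₀) :
    ∃ K ⊆ K₀, Minimal (fun K => IsClosed K ∧ f '' K = f '' K₀) K :=
  zorn_superset_nonempty {K | IsClosed K ∧ f '' K = f '' K₀} (fun c hc hchain hne =>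
    ⟨⋂₀ c, ⟨isClosed_sInter fun _ hK => (hc hK).1, image_sInter_eq_of_isChain hf hc hchain hne⟩,
      fun _ => sInter_subset_of_mem⟩) K₀ ⟨hK₀, rfl⟩

theorem Minimal.exists_isOpen_inter_preimage_subset [CompactSpace Q] [T2Space S]
    (hf : Continuous f) {K : Set Q} {L : Set S} (hK : Minimal (fun K => IsClosed K ∧ f '' K = L) K)
    {W : Set Q} (hW : IsOpen W) (hKW : (K ∩ W).Nonempty) :
    ∃ U : Set S, IsOpen U ∧ (L ∩ U).Nonempty ∧ K ∩ f ⁻¹' U ⊆ W := by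
  obtain ⟨hKcl, hKL⟩ := hK.prop
  have hcl : IsClosed (K \ W) := hKcl.sdiff hW
  have hsub : f '' (K \ W) ⊆ L := hKL ▸ image_mono sdiff_subset
  have hne : f '' (K \ W) ≠ L := fun h => by
    obtain ⟨u, huK, huW⟩ := hKW
    exact (hK.eq_of_subset ⟨hcl, h⟩ sdiff_subset ▸ huK).2 huW
  refine ⟨(f '' (K \ W))ᶜ, ((hcl.isCompact.image hf).isClosed).isOpen_compl, ?_, ?_⟩
  · obtain ⟨x, hxL, hx⟩ := exists_of_ssubset (hsub.ssubset_of_ne hne)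
    exact ⟨x, hxL, hx⟩
  · rintro u ⟨huK, hu⟩
    by_contra huW
    exact hu ⟨u, ⟨huK, huW⟩, rfl⟩

end MinimalClosedPreimage

/-- With `0 < ε` the bound also covers the junk value `sInf s = 0` for `s` unbounded below. -/
theorem Real.sInf_lt_of_mem_of_lt {s : Set ℝ} {a ε : ℝ} (hε : 0 < ε) (ha : a ∈ s) (haε : a < ε) :
    sInf s < ε := by
  by_cases hs : BddBelow s
  · exact (csInf_le hs ha).trans_lt haε
  · exact Real.sInf_of_not_bddBelow hs ▸ hε

theorem stmt2_general {Q S : Type*} [TopologicalSpace Q] [CompactSpace Q]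
    [TopologicalSpace S] [T2Space S]
    (f : Q → S) (hf : Continuous f) (hsurj : Function.Surjective f)
    (d : Q → Q → ℝ)
    (hfrag : Fragments d) :
    Fragments (fun x y : S => sInf {r : ℝ | ∃ u v : Q, f u = x ∧ f v = y ∧ r = d u v}) := by
  intro ε hε L hLne hLcl
  obtain ⟨K, -, hK⟩ := exists_minimal_isClosed_image_eq hf (hLcl.preimage hf)
  rw [image_preimage_eq L hsurj] at hK
  have hKL : f '' K = L := hK.prop.2
  obtain ⟨W, hW, hKW, hdiam⟩ := hfrag ε hε K (image_nonempty.mp (hKL ▸ hLne)) hK.prop.1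
  obtain ⟨U, hU, hLU, hKU⟩ := hK.exists_isOpen_inter_preimage_subset hf hW hKW
  refine ⟨U, hU, hLU, ?_⟩
  rintro x ⟨hxL, hxU⟩ y ⟨hyL, hyU⟩
  obtain ⟨u, hu, rfl⟩ := hKL ▸ hxL
  obtain ⟨v, hv, rfl⟩ := hKL ▸ hyL
  exact Real.sInf_lt_of_mem_of_lt hε ⟨u, v, rfl, rfl, rfl⟩
    (hdiam u ⟨hu, hKU ⟨hu, hxU⟩⟩ v ⟨hv, hKU ⟨hv, hyU⟩⟩)

theorem stmt2 {Q S : Type*} [TopologicalSpace Q] [CompactSpace Q] [T2Space Q]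
    [TopologicalSpace S] [CompactSpace S] [T2Space S]
    (f : Q → S) (hf : Continuous f) (hsurj : Function.Surjective f)
    (d : Q → Q → ℝ)
    (hlsc : LowerSemicontinuous (fun p : Q × Q => d p.1 p.2))
    (hfrag : Fragments d) :
    Fragments (fun x y : S => sInf {r : ℝ | ∃ u v : Q, f u = x ∧ f v = y ∧ r = d u v}) :=
  stmt2_general f hf hsurj d hfrag
end

section
/- Fix a well order ≺ on a set Γ. Let S = { x ∈ {0,1}^Γ : ∀ i ≺ j, x_i ≤ x_j } (the set of {0,1}-valued ≺-increasing functions). Then the closed convex hull of S in [0,1]^Γ equals { x ∈ [0,1]^Γ : ∀ i ≺ j, x_i ≤ x_j }, the set of all [0,1]-valued ≺-increasing functions. -/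
/-!
A `[0,1]`-valued increasing function `x` is the pointwise limit of its discretisations
`⌊n x⌋₊ / n = (1/n) ∑_{k=1}^{n} 𝟙[k/n ≤ x]`, which are averages of the threshold functions
`𝟙[t ≤ x]`; these are again increasing and `{0,1}`-valued. Conversely the `[0,1]`-valued
increasing functions form a closed convex set containing the `{0,1}`-valued ones.
-/

open Set Filter Topology

theorem sum_range_ite_div_le_eq_floor {t : ℝ} (ht : t ≤ 1) (n : ℕ) :
    ∑ k ∈ Finset.range n, (if (k + 1 : ℝ) / n ≤ t then (1:ℝ) else 0) = ⌊t * n⌋₊ := by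
  rcases n.eq_zero_or_pos with rfl | hn
  · simp
  have hfloor : ⌊t * n⌋₊ ≤ n := Nat.floor_le_of_le (by nlinarith)
  have key : ∀ k : ℕ, (k + 1 : ℝ) / n ≤ t ↔ k < ⌊t * n⌋₊ := fun k => by
    rw [div_le_iff₀ (by positivity), Nat.lt_iff_add_one_le, Nat.le_floor_iff' k.succ_ne_zero]
    push_cast; rfl
  have hfilter : (Finset.range n).filter (· < ⌊t * n⌋₊) = Finset.range ⌊t * n⌋₊ := by
    ext k; simp only [Finset.mem_filter, Finset.mem_range]; omega
  simp only [key, Finset.sum_boole, hfilter, Finset.card_range]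

section

variable (Γ : Type*) [LT Γ]

def increasingIndicators : Set (Γ → ℝ) :=
  {x | (∀ i, x i = 0 ∨ x i = 1) ∧ ∀ i j : Γ, i < j → x i ≤ x j}

def increasingUnitFunctions : Set (Γ → ℝ) :=
  {x | (∀ i, x i ∈ Icc (0:ℝ) 1) ∧ ∀ i j : Γ, i < j → x i ≤ x j}

variable {Γ}

theorem increasingIndicators_subset : increasingIndicators Γ ⊆ increasingUnitFunctions Γ := by
  rintro x ⟨hx01, hx⟩
  refine ⟨fun i => ?_, hx⟩
  rcases hx01 i with h | h <;> simp [h]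

theorem convex_increasingUnitFunctions : Convex ℝ (increasingUnitFunctions Γ) := by
  rintro x ⟨hx01, hx⟩ y ⟨hy01, hy⟩ a b ha hb hab
  refine ⟨fun i => convex_Icc (0:ℝ) 1 (hx01 i) (hy01 i) ha hb hab, fun i j hij => ?_⟩
  have := hx i j hij
  have := hy i j hij
  simp only [Pi.add_apply, Pi.smul_apply, smul_eq_mul]
  gcongr

theorem isClosed_increasingUnitFunctions : IsClosed (increasingUnitFunctions Γ) := by
  simp only [increasingUnitFunctions, ofPred_and, ofPred_forall]
  exact (isClosed_iInter fun i => isClosed_Icc.preimage (continuous_apply i)).inter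
    (isClosed_iInter fun i => isClosed_iInter fun j => isClosed_iInter fun _ =>
      isClosed_le (continuous_apply i) (continuous_apply j))

theorem closure_convexHull_increasingIndicators_subset :
    closure (convexHull ℝ (increasingIndicators Γ)) ⊆ increasingUnitFunctions Γ :=
  closure_minimal (convexHull_min increasingIndicators_subset convex_increasingUnitFunctions)
    isClosed_increasingUnitFunctions

theorem threshold_mem_increasingIndicators {x : Γ → ℝ} (hx : ∀ i j : Γ, i < j → x i ≤ x j)
    (t : ℝ) : (fun i => if t ≤ x i then (1:ℝ) else 0) ∈ increasingIndicators Γ := by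
  refine ⟨fun i => by dsimp only; split_ifs <;> simp, fun i j hij => ?_⟩
  dsimp only
  split_ifs with hi hj hj
  · rfl
  · exact absurd (hi.trans (hx i j hij)) hj
  · exact zero_le_one
  · rfl

theorem floor_mul_div_mem_convexHull_increasingIndicators {x : Γ → ℝ}
    (hx : x ∈ increasingUnitFunctions Γ) {n : ℕ} (hn : 0 < n) :
    (fun i => (⌊x i * n⌋₊ : ℝ) / n) ∈ convexHull ℝ (increasingIndicators Γ) := by
  have hsum : (fun i => (⌊x i * n⌋₊ : ℝ) / n) = ∑ k ∈ Finset.range n,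
      (n⁻¹ : ℝ) • fun i => if (k + 1 : ℝ) / n ≤ x i then (1:ℝ) else 0 := by
    ext i
    simp only [Finset.sum_apply, Pi.smul_apply, smul_eq_mul, ← Finset.mul_sum,
      sum_range_ite_div_le_eq_floor (hx.1 i).2]
    ring
  rw [hsum]
  refine (convex_convexHull ℝ _).sum_mem (fun _ _ => by positivity) ?_ fun k _ =>
    subset_convexHull ℝ _ (threshold_mem_increasingIndicators hx.2 _)
  simp [hn.ne']

theorem increasingUnitFunctions_subset_closure_convexHull :
    increasingUnitFunctions Γ ⊆ closure (convexHull ℝ (increasingIndicators Γ)) := by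
  intro x hx
  have hlim : Tendsto (fun n : ℕ => fun i => (⌊x i * n⌋₊ : ℝ) / n) atTop (𝓝 x) :=
    tendsto_pi_nhds.2 fun i =>
      (tendsto_nat_floor_mul_div_atTop (hx.1 i).1).comp tendsto_natCast_atTop_atTop
  exact mem_closure_of_tendsto hlim <| (eventually_gt_atTop 0).mono fun n hn =>
    floor_mul_div_mem_convexHull_increasingIndicators hx hn

end

theorem stmt6_general {Γ : Type*} [LinearOrder Γ] :
    closure (convexHull ℝ
      {x : Γ → ℝ | (∀ i, x i = 0 ∨ x i = 1) ∧ ∀ i j : Γ, i < j → x i ≤ x j}) =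
    {x : Γ → ℝ | (∀ i, x i ∈ Set.Icc (0:ℝ) 1) ∧ ∀ i j : Γ, i < j → x i ≤ x j} :=
  closure_convexHull_increasingIndicators_subset.antisymm
    increasingUnitFunctions_subset_closure_convexHull

theorem stmt6 {Γ : Type*} [LinearOrder Γ] [WellFoundedLT Γ] :
    closure (convexHull ℝ
      {x : Γ → ℝ | (∀ i, x i = 0 ∨ x i = 1) ∧ ∀ i j : Γ, i < j → x i ≤ x j}) =
    {x : Γ → ℝ | (∀ i, x i ∈ Set.Icc (0:ℝ) 1) ∧ ∀ i j : Γ, i < j → x i ≤ x j} :=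
  stmt6_general
end

section
/- With Φ : [0,1]^ℕ → [0,1]^ℕ defined by Φ(x)_0 = x_0 and Φ(x)_{n+1} = x_{n+1} + sign(Φ(x)_n - x_{n+1}) · max(|Φ(x)_n - x_{n+1}| - 2^{-n}, 0), the function φ(x) = lim_n Φ(x)_n is well defined and continuous on [0,1]^ℕ with the product topology. -/
open Set Filter

/-! `Φ(x)_{n+1}` is `x_{n+1}` clipped to `[Φ(x)_n - 2^{-n}, Φ(x)_n + 2^{-n}]`. Hence consecutive terms
differ by at most `2^{-n}` uniformly in `x`, and each `Φ(x)_n` is a continuous function of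
`x_0, …, x_n`. So `Φ(x)` is uniformly Cauchy, and `φ` is a uniform limit of continuous functions. -/

/-- The correction map `Φ`. -/
noncomputable def Phi (x : ℕ → ℝ) : ℕ → ℝ
  | 0 => x 0
  | n + 1 => x (n + 1) +
      Real.sign (Phi x n - x (n + 1)) * max (|Phi x n - x (n + 1)| - (1/2 : ℝ)^n) 0

/-- `φ(x) = lim_n Φ(x)_n`, defined on the cube `[0,1]^ℕ` with the product topology. -/
noncomputable def phiLim (x : ℕ → Set.Icc (0:ℝ) 1) : ℝ :=
  limUnder atTop (Phi (fun n => (x n : ℝ)))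

lemma add_sign_mul_max_abs_sub_sub_eq_max_min (a y : ℝ) {c : ℝ} (hc : 0 ≤ c) :
    y + Real.sign (a - y) * max (|a - y| - c) 0 = max (min y (a + c)) (a - c) := by
  rcases lt_trichotomy (a - y) 0 with h | h | h
  · rw [Real.sign_of_neg h, abs_of_neg h, max_eq_left (le_min (by linarith) (by linarith))]
    rcases le_total y (a + c) with h' | h'
    · rw [min_eq_left h', max_eq_right (by linarith)]; ring
    · rw [min_eq_right h', max_eq_left (by linarith)]; ring
  · rw [h, abs_zero, zero_sub, max_eq_right (neg_nonpos.mpr hc), mul_zero, add_zero,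
      min_eq_left (by linarith), max_eq_left (by linarith)]
  · rw [Real.sign_of_pos h, abs_of_pos h, min_eq_left (by linarith)]
    rcases le_total y (a - c) with h' | h'
    · rw [max_eq_right h', max_eq_left (by linarith)]; ring
    · rw [max_eq_left h', max_eq_right (by linarith)]; ring

lemma dist_max_min_le (a y : ℝ) {c : ℝ} (hc : 0 ≤ c) :
    dist a (max (min y (a + c)) (a - c)) ≤ c := by
  have hupper : max (min y (a + c)) (a - c) ≤ a + c := max_le (min_le_right _ _) (by linarith)
  have hlower : a - c ≤ max (min y (a + c)) (a - c) := le_max_right _ _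
  rw [Real.dist_eq, abs_le]
  constructor <;> linarith

lemma tendstoUniformly_limUnder_of_dist_le_geometric {β α : Type*} [PseudoMetricSpace α]
    [CompleteSpace α] [Nonempty α] {F : ℕ → β → α} {r C : ℝ} (hr₀ : 0 ≤ r) (hr : r < 1)
    (hF : ∀ n b, dist (F n b) (F (n + 1) b) ≤ C * r ^ n) :
    TendstoUniformly F (fun b => limUnder atTop (F · b)) atTop := by
  have hdist (b : β) (n : ℕ) : dist (F n b) (limUnder atTop (F · b)) ≤ C * r ^ n / (1 - r) :=
    dist_le_of_le_geometric_of_tendsto r C hr (hF · b)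
      (cauchySeq_of_le_geometric r C hr (hF · b)).tendsto_limUnder n
  have hbound : Tendsto (fun n : ℕ => C * r ^ n / (1 - r)) atTop (nhds 0) := by
    simpa using ((tendsto_pow_atTop_nhds_zero_of_lt_one hr₀ hr).const_mul C).div_const (1 - r)
  rw [Metric.tendstoUniformly_iff]
  intro ε hε
  filter_upwards [hbound.eventually_lt_const hε] with n hn b
  rw [dist_comm]
  exact (hdist b n).trans_lt hn

lemma Phi_succ_eq_max_min (x : ℕ → ℝ) (n : ℕ) :
    Phi x (n + 1) = max (min (x (n + 1)) (Phi x n + (1/2 : ℝ) ^ n)) (Phi x n - (1/2 : ℝ) ^ n) :=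
  add_sign_mul_max_abs_sub_sub_eq_max_min _ _ (by positivity)

lemma dist_Phi_succ_le (x : ℕ → ℝ) (n : ℕ) : dist (Phi x n) (Phi x (n + 1)) ≤ (1/2 : ℝ) ^ n := by
  rw [Phi_succ_eq_max_min]
  exact dist_max_min_le _ _ (by positivity)

lemma continuous_Phi_apply (n : ℕ) : Continuous fun x : ℕ → ℝ => Phi x n := by
  induction n with
  | zero => exact continuous_apply 0
  | succ n ih =>
    simp only [Phi_succ_eq_max_min]
    fun_prop

theorem stmt9 :
    (∀ x : ℕ → Set.Icc (0:ℝ) 1,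
      Tendsto (Phi (fun n => (x n : ℝ))) atTop (nhds (phiLim x))) ∧
    Continuous phiLim := by
  have hunif : TendstoUniformly (fun n x => Phi x n) (fun x => limUnder atTop (Phi x)) atTop :=
    tendstoUniformly_limUnder_of_dist_le_geometric (C := 1) (by norm_num) (by norm_num)
      fun n x => (dist_Phi_succ_le x n).trans_eq (one_mul _).symm
  refine ⟨fun x => hunif.tendsto_at _, ?_⟩
  have hlim : Continuous fun x : ℕ → ℝ => limUnder atTop (Phi x) :=
    hunif.continuous (Eventually.of_forall continuous_Phi_apply).frequently
  exact hlim.comp (continuous_pi fun n => continuous_subtype_val.comp (continuous_apply n))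
end

section
/- Let K and L be compact Hausdorff spaces, d_L a pseudometric fragmenting L, φ : L → K a continuous surjection, and d_K a pseudometric on K such that d_K(φ(z), φ(z')) ≤ C · d_L(z, z') for all z, z' ∈ L and some constant C > 0. If d_L is lower semicontinuous on L × L, then d_K fragments K. -/
open Set

theorem stmt16 {K L : Type*}
    [TopologicalSpace K] [CompactSpace K] [T2Space K]
    [TopologicalSpace L] [CompactSpace L] [T2Space L]
    (dL : L → L → ℝ)
    (hdL_refl : ∀ z, dL z z = 0) (hdL_symm : ∀ z z', dL z z' = dL z' z)
    (hdL_tri : ∀ z z' z'', dL z z'' ≤ dL z z' + dL z' z'')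
    (hdL_lsc : LowerSemicontinuous (fun p : L × L => dL p.1 p.2))
    (hdL_frag : Fragments dL)
    (φ : L → K) (hφ : Continuous φ) (hφsurj : Function.Surjective φ)
    (dK : K → K → ℝ)
    (hdK_refl : ∀ x, dK x x = 0) (hdK_symm : ∀ x y, dK x y = dK y x)
    (hdK_tri : ∀ x y z, dK x z ≤ dK x y + dK y z)
    (C : ℝ) (hC : 0 < C)
    (hlip : ∀ z z' : L, dK (φ z) (φ z') ≤ C * dL z z') :
    Fragments dK := by
  intro ε hε S hSne hScl
  -- family of closed sets mapping onto S
  set 𝒞 : Set (Set L) := {M | IsClosed M ∧ φ '' M = S} with h𝒞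
  have hpre : φ ⁻¹' S ∈ 𝒞 := by
    refine ⟨hScl.preimage hφ, ?_⟩
    apply subset_antisymm
    · rintro _ ⟨z, hz, rfl⟩; exact hz
    · intro s hs
      obtain ⟨z, rfl⟩ := hφsurj s
      exact ⟨z, hs, rfl⟩
  -- Zorn: minimal element
  obtain ⟨M, -, hMmem, hMmin⟩ :
      ∃ M, M ⊆ φ ⁻¹' S ∧ Minimal (· ∈ 𝒞) M := by
    apply zorn_superset_nonempty
    · intro c hc hchain hcne
      refine ⟨⋂ M ∈ c, M, ⟨isClosed_biInter fun M hM => (hc hM).1, ?_⟩, fun s hs => biInter_subset_of_mem hs⟩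
      apply subset_antisymm
      · rintro _ ⟨z, hz, rfl⟩
        obtain ⟨M₀, hM₀⟩ := hcne
        have := mem_iInter₂.1 hz M₀ hM₀
        rw [← (hc hM₀).2]
        exact ⟨z, this, rfl⟩
      · intro s hs
        haveI : Nonempty c := hcne.to_subtype
        have hne : (⋂ M : c, ((M : Set L) ∩ φ ⁻¹' {s})).Nonempty := by
          apply IsCompact.nonempty_iInter_of_directed_nonempty_isCompact_isClosed
          · rintro ⟨A, hA⟩ ⟨B, hB⟩
            rcases hchain.total hA hB with h | h
            · exact ⟨⟨A, hA⟩, Set.inter_subset_inter_left _ le_rfl,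
                Set.inter_subset_inter_left _ h⟩
            · exact ⟨⟨B, hB⟩, Set.inter_subset_inter_left _ h,
                Set.inter_subset_inter_left _ le_rfl⟩
          · rintro ⟨A, hA⟩
            have : s ∈ φ '' A := ((hc hA).2).symm ▸ hs
            obtain ⟨z, hz, hzs⟩ := this
            exact ⟨z, hz, by simpa using hzs⟩
          · rintro ⟨A, hA⟩
            exact ((hc hA).1.inter (isClosed_singleton.preimage hφ)).isCompact
          · rintro ⟨A, hA⟩
            exact (hc hA).1.inter (isClosed_singleton.preimage hφ)
        obtain ⟨z, hz⟩ := hne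
        simp only [mem_iInter, mem_inter_iff, mem_preimage, mem_singleton_iff] at hz
        exact ⟨z, mem_iInter₂.2 fun A hA => (hz ⟨A, hA⟩).1, (hz (Classical.arbitrary c)).2⟩
    · exact hpre
  obtain ⟨hMcl, hMim⟩ := hMmem
  have hMne : M.Nonempty := by
    obtain ⟨s, hs⟩ := hSne
    have : s ∈ φ '' M := hMim ▸ hs
    obtain ⟨z, hz, -⟩ := this
    exact ⟨z, hz⟩
  -- apply fragmentation of dL on M
  obtain ⟨V, hVopen, hVne, hVdiam⟩ := hdL_frag (ε / C) (div_pos hε hC) M hMne hMcl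
  -- the open set in K
  refine ⟨(φ '' (M \ V))ᶜ, ?_, ?_, ?_⟩
  · rw [isOpen_compl_iff]
    exact (((hMcl.isCompact.diff hVopen).image hφ).isClosed)
  · -- nonempty: by minimality φ '' (M \ V) ≠ S
    by_contra h
    rw [not_nonempty_iff_eq_empty] at h
    have hsub : S ⊆ φ '' (M \ V) := by
      intro s hs
      by_contra hns
      have : s ∈ S ∩ (φ '' (M \ V))ᶜ := ⟨hs, hns⟩
      rw [h] at this
      exact this.elim
    have hmem : M \ V ∈ 𝒞 := by
      refine ⟨hMcl.sdiff hVopen, subset_antisymm ?_ hsub⟩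
      rintro _ ⟨z, hz, rfl⟩
      rw [← hMim]
      exact ⟨z, hz.1, rfl⟩
    have := hMmin hmem (diff_subset)
    obtain ⟨z, hzM, hzV⟩ := hVne
    have : z ∈ M \ V := this hzM
    exact this.2 hzV
  · rintro x ⟨hxS, hxU⟩ y ⟨hyS, hyU⟩
    have hx : ∃ z ∈ M ∩ V, φ z = x := by
      have : x ∈ φ '' M := hMim ▸ hxS
      obtain ⟨z, hz, rfl⟩ := this
      by_cases hzV : z ∈ V
      · exact ⟨z, ⟨hz, hzV⟩, rfl⟩
      · exact absurd ⟨z, ⟨hz, hzV⟩, rfl⟩ hxU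
    have hy : ∃ z ∈ M ∩ V, φ z = y := by
      have : y ∈ φ '' M := hMim ▸ hyS
      obtain ⟨z, hz, rfl⟩ := this
      by_cases hzV : z ∈ V
      · exact ⟨z, ⟨hz, hzV⟩, rfl⟩
      · exact absurd ⟨z, ⟨hz, hzV⟩, rfl⟩ hyU
    obtain ⟨z, hzMV, rfl⟩ := hx
    obtain ⟨w, hwMV, rfl⟩ := hy
    calc dK (φ z) (φ w) ≤ C * dL z w := hlip z w
      _ < C * (ε / C) := by
          exact (mul_lt_mul_iff_right₀ hC).2 (hVdiam z hzMV w hwMV)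
      _ = ε := mul_div_cancel₀ ε hC.ne'
end

section
/- Let λ be a cardinal with uncountable cofinality, and let o : N → Ord be an injection of the Baire space N = ℕ^ℕ into the ordinals (the position function of a well order ≺ on N). Then the intersection over all τ with o(τ) < λ of the Baire-space closures cl{ ξ : o(τ) < o(ξ) < λ } is nonempty. -/
open Set

/-!
Since the Baire space is Lindelöf, it suffices that every countable subfamily of the closures
has a common point. For countably many `τ` with `o τ < λ`, uncountable cofinality gives `β < λ`
above all `o τ`, and the `ξ` with `o ξ = β` lies in every one of the sets themselves.
-/

theorem LindelofSpace.iInter_nonempty_of_countable {X ι : Type*} [TopologicalSpace X]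
    [LindelofSpace X] {F : ι → Set X} (hF : ∀ i, IsClosed (F i))
    (h : ∀ u : Set ι, u.Countable → (⋂ i ∈ u, F i).Nonempty) : (⋂ i, F i).Nonempty := by
  by_contra hempty
  obtain ⟨u, hu, hu_empty⟩ := isLindelof_univ.elim_countable_subfamily_closed F hF
    (by rwa [univ_inter, ← not_nonempty_iff_eq_empty])
  rw [univ_inter] at hu_empty
  exact (h u hu).ne_empty hu_empty

universe u v

theorem Ordinal.exists_lt_forall_lt_of_aleph0_lt_cof {ι : Type u} [Countable ι]
    {a : Ordinal.{v}} (ha : Cardinal.aleph0 < a.cof) {f : ι → Ordinal} (hf : ∀ i, f i < a) :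
    ∃ b < a, ∀ i, f i < b := by
  refine ⟨⨆ i, f i + 1, lift_iSup_add_one_lt_of_lt_cof ?_ hf, lt_iSup_add_one f⟩
  rw [← lift_cof]
  exact (Cardinal.lift_le_aleph0.2 Cardinal.mk_le_aleph0).trans_lt (Cardinal.aleph0_lt_lift.2 ha)

theorem stmt18_general (lam : Ordinal)
    (hcof : Cardinal.aleph0 < lam.cof)
    (o : (ℕ → ℕ) → Ordinal)
    (hrange : ∀ β : Ordinal, β < lam → ∃ ξ : ℕ → ℕ, o ξ = β) :
    (⋂ τ ∈ {τ : ℕ → ℕ | o τ < lam},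
      closure {ξ : ℕ → ℕ | o τ < o ξ ∧ o ξ < lam}).Nonempty := by
  rw [biInter_eq_iInter]
  refine LindelofSpace.iInter_nonempty_of_countable (fun _ => isClosed_closure) fun u hu => ?_
  have : Countable u := hu.to_subtype
  obtain ⟨β, hβ, hlt⟩ := Ordinal.exists_lt_forall_lt_of_aleph0_lt_cof hcof
    (f := fun τ : u => o τ.1.1) fun τ => τ.1.2
  obtain ⟨ξ, rfl⟩ := hrange β hβ
  exact ⟨ξ, mem_iInter₂.2 fun τ hτ => subset_closure ⟨hlt ⟨τ, hτ⟩, hβ⟩⟩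

theorem stmt18 (lam : Ordinal)
    (hcof : Cardinal.aleph0 < lam.cof)
    (o : (ℕ → ℕ) → Ordinal) (ho : Function.Injective o)
    (hrange : ∀ β : Ordinal, β < lam → ∃ ξ : ℕ → ℕ, o ξ = β) :
    (⋂ τ ∈ {τ : ℕ → ℕ | o τ < lam},
      closure {ξ : ℕ → ℕ | o τ < o ξ ∧ o ξ < lam}).Nonempty :=
  stmt18_general lam hcof o hrange
end
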